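/- The 4×4 matrix over F_{m^2} with ω on the diagonal, entries C_{12}=C_{21}=C_{13}=C_{31}=C_{24}=C_{42}=1, C_{34}=C_{43}=α for any α ∈ F_m \ {0,1}, and zeros elsewhere, generates (over F_m) a self-dual additive (4, m^4, 3) MDS code for every prime power m ≥ 3, with weight enumerator W(1,y) = 1 + 4(m^2−1) y^3 + (m^2−3)(m^2−1) y^4. -/

import Mathlib

open scoped BigOperators

/-- The Hermitian trace inner product on `F_{m^2}^n`, `m = p^r`:
    `u * v = Tr_{m/p}((u · v^m - u^m · v)/(ω - ω^m))`, computed inside `K = F_{m^2}`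
    using the trace formula `Tr_{m/p}(c) = ∑_{i=0}^{r-1} c^{p^i}` (the condition
    `u * v = 0` is unchanged by computing the trace inside `K`). -/
def hermForm {K : Type*} [Field K] (p r m : ℕ) (ω : K) {n : ℕ} (u v : Fin n → K) : K :=
  ∑ i ∈ Finset.range r,
    (((∑ j, u j * v j ^ m) - ∑ j, u j ^ m * v j) / (ω - ω ^ m)) ^ p ^ i

/-!
Write the elements of `F_{m²}` as `a ω + b` with `a, b ∈ F_m`. The code spanned over `F_m` by
the rows of `ω I + G`, where `G` is the symmetric matrix of off-diagonal entries, consists of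
the words `q ω + q G` for `q ∈ F_m⁴`. In these coordinates the numerator `u c^m - u^m c` of the
Hermitian trace form is `ω - ω^m` times the symplectic form `a b' - b a'`, so it vanishes on the
code because `G` is symmetric; conversely, nondegeneracy of the trace turns orthogonality to the
code into `b = a G`, i.e. membership.

A codeword vanishes at coordinate `j` iff `q j = (q G) j = 0`, and because `α ≠ 0, 1` any two
such conditions force `q = 0`. So two coordinates determine a codeword; as there are
`m⁴ = (m²)²` codewords, every pair of values occurs, and the weight distribution follows.
-/

open Polynomial Matrix

theorem FiniteField.one_lt_and_ne_zero_of_card_eq_pow {F : Type*} [Field F] [Fintype F]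
    {p r : ℕ} (hF : Fintype.card F = p ^ r) : 1 < p ∧ r ≠ 0 := by
  have hpr : 1 < p ^ r := hF ▸ Fintype.one_lt_card
  have hr : r ≠ 0 := by rintro rfl; simp at hpr
  exact ⟨(Nat.one_lt_pow_iff hr).mp hpr, hr⟩

theorem FiniteField.exists_sum_pow_pow_ne_zero {F : Type*} [Field F] [Fintype F] {p r : ℕ}
    (hF : Fintype.card F = p ^ r) : ∃ e : F, ∑ i ∈ Finset.range r, e ^ p ^ i ≠ 0 := by
  obtain ⟨hp, hr⟩ := FiniteField.one_lt_and_ne_zero_of_card_eq_pow hF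
  by_contra! h
  set Q : F[X] := ∑ i ∈ Finset.range r, X ^ p ^ i
  have hQ : Q = 0 := by
    refine eq_zero_of_natDegree_lt_card_of_eval_eq_zero Q (f := id) Function.injective_id
      (fun e => by simpa [Q, eval_finsetSum] using h e) ?_
    refine lt_of_le_of_lt (natDegree_sum_le_of_forall_le _ _ (n := p ^ (r - 1)) fun i hi => ?_) ?_
    · rw [natDegree_X_pow]
      exact Nat.pow_le_pow_right (by omega) (by simp at hi; omega)
    · rw [hF]
      exact Nat.pow_lt_pow_right hp (by omega)
  have hcoeff : Q.coeff (p ^ (r - 1)) = 1 := by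
    simp only [Q, finsetSum_coeff, coeff_X_pow, Nat.pow_right_inj hp]
    simp [hr]
  simp [hQ] at hcoeff

theorem FiniteField.eq_zero_of_forall_sum_pow_pow_mul_eq_zero {F : Type*} [Field F] [Fintype F]
    {p r : ℕ} (hF : Fintype.card F = p ^ r) {s : F}
    (h : ∀ e : F, ∑ i ∈ Finset.range r, (e * s) ^ p ^ i = 0) : s = 0 := by
  obtain ⟨e, he⟩ := FiniteField.exists_sum_pow_pow_ne_zero hF
  by_contra hs
  exact he (by simpa [hs] using h (e / s))

theorem pow_ne_self_of_forall_exists_pow_eq {K : Type*} [Field K] [Fintype K] {ω : K}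
    (hω : ∀ x : K, x ≠ 0 → ∃ k : ℕ, ω ^ k = x) {m : ℕ} (hm1 : 1 < m)
    (hmK : m < Fintype.card K) : ω ^ m ≠ ω := by
  intro hωm
  have hfix : ∀ x : K, x ^ m = x := by
    intro x
    rcases eq_or_ne x 0 with rfl | hx
    · exact zero_pow (by omega)
    · obtain ⟨k, rfl⟩ := hω x hx
      rw [← pow_mul, mul_comm, pow_mul, hωm]
  refine FiniteField.X_pow_card_sub_X_ne_zero K hm1 <|
    eq_zero_of_natDegree_lt_card_of_eval_eq_zero _ (f := id) Function.injective_id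
      (fun x => by simp [hfix]) ?_
  rwa [FiniteField.X_pow_card_sub_X_natDegree_eq K hm1]

section Coordinates

variable {F K : Type*} [Field F] [Field K] [Algebra F K]

theorem algebraMap_pow_card [Fintype F] (a : F) :
    algebraMap F K a ^ Fintype.card F = algebraMap F K a := by
  rw [← map_pow, FiniteField.pow_card]

theorem notMem_range_algebraMap_of_pow_card_ne [Fintype F] {ω : K}
    (hω : ω ^ Fintype.card F ≠ ω) : ω ∉ Set.range (algebraMap F K) := by
  rintro ⟨a, rfl⟩
  exact hω (algebraMap_pow_card a)

variable {ω : K}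

theorem eq_zero_of_algebraMap_mul_add_eq_zero (hωF : ω ∉ Set.range (algebraMap F K)) {a b : F}
    (h : algebraMap F K a * ω + algebraMap F K b = 0) : a = 0 ∧ b = 0 := by
  obtain rfl : a = 0 := by
    by_contra ha
    refine hωF ⟨-b / a, ?_⟩
    rw [map_div₀, map_neg, div_eq_iff (by simpa using ha)]
    linear_combination -h
  simpa using h

theorem bijective_algebraMap_mul_add [Fintype F] [Fintype K]
    (hK : Fintype.card K = Fintype.card F ^ 2) (hωF : ω ∉ Set.range (algebraMap F K)) :
    Function.Bijective fun z : F × F => algebraMap F K z.1 * ω + algebraMap F K z.2 := by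
  refine (Fintype.bijective_iff_injective_and_card _).mpr ⟨fun z z' h => ?_, ?_⟩
  · have := eq_zero_of_algebraMap_mul_add_eq_zero hωF (a := z.1 - z'.1) (b := z.2 - z'.2)
      (by simp only [map_sub]; linear_combination h)
    exact Prod.ext (sub_eq_zero.mp this.1) (sub_eq_zero.mp this.2)
  · rw [Fintype.card_prod, hK, sq]

variable [Fintype F]

theorem algebraMap_mul_add_pow_card (a b : F) :
    (algebraMap F K a * ω + algebraMap F K b) ^ Fintype.card F
      = algebraMap F K a * ω ^ Fintype.card F + algebraMap F K b := by
  simpa [mul_pow, algebraMap_pow_card] using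
    map_add (FiniteField.frobeniusAlgHom F K) (algebraMap F K a * ω) (algebraMap F K b)

theorem algebraMap_mul_add_mul_pow_card_sub (a b a' b' : F) :
    (algebraMap F K a * ω + algebraMap F K b) * (algebraMap F K a' * ω + algebraMap F K b') ^
        Fintype.card F
      - (algebraMap F K a * ω + algebraMap F K b) ^ Fintype.card F *
        (algebraMap F K a' * ω + algebraMap F K b')
      = (ω - ω ^ Fintype.card F) * algebraMap F K (a * b' - b * a') := by
  rw [algebraMap_mul_add_pow_card, algebraMap_mul_add_pow_card, map_sub, map_mul, map_mul]
  ring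

theorem hermForm_algebraMap_mul_add {p r n : ℕ} (hω : ω ^ Fintype.card F ≠ ω)
    (a b a' b' : Fin n → F) :
    hermForm p r (Fintype.card F) ω (fun j => algebraMap F K (a j) * ω + algebraMap F K (b j))
        (fun j => algebraMap F K (a' j) * ω + algebraMap F K (b' j))
      = algebraMap F K (∑ i ∈ Finset.range r, (a ⬝ᵥ b' - b ⬝ᵥ a') ^ p ^ i) := by
  have hω' : ω - ω ^ Fintype.card F ≠ 0 := sub_ne_zero.mpr hω.symm
  simp only [hermForm, ← Finset.sum_sub_distrib, algebraMap_mul_add_mul_pow_card_sub,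
    ← Finset.mul_sum, mul_div_cancel_left₀ _ hω', map_sum, map_pow]
  simp [dotProduct, Finset.sum_sub_distrib]

end Coordinates

section AdditiveCode

variable {F K : Type*} [Field F] [Field K] [Algebra F K] {ι : Type*} [Fintype ι]

/-- `codeword ω G q = q (ω I + G)`. -/
def codeword (ω : K) (G : Matrix ι ι F) : (ι → F) →ₗ[F] (ι → K) where
  toFun q j := algebraMap F K (q j) * ω + algebraMap F K ((q ᵥ* G) j)
  map_add' q q' := by
    ext j
    simp only [Pi.add_apply, add_vecMul, map_add]
    ring
  map_smul' e q := by
    ext j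
    simp only [Pi.smul_apply, smul_vecMul, smul_eq_mul, map_mul, RingHom.id_apply]
    rw [Algebra.smul_def]
    ring

theorem codeword_eq (ω : K) (G : Matrix ι ι F) (q : ι → F) :
    codeword ω G q = fun j => algebraMap F K (q j) * ω + algebraMap F K ((q ᵥ* G) j) :=
  rfl

theorem span_rows_eq_range_codeword [DecidableEq ι] (ω : K) (G : Matrix ι ι F) :
    Submodule.span F (Set.range (ω • (1 : Matrix ι ι K) + G.map (algebraMap F K)))
      = LinearMap.range (codeword ω G) := by
  ext u
  refine (Submodule.mem_span_range_iff_exists_fun F).trans <| exists_congr fun q =>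
    Eq.congr_left (funext fun j => ?_)
  simp only [Finset.sum_apply, Pi.smul_apply, Matrix.add_apply, Matrix.smul_apply,
    Matrix.one_apply, Matrix.map_apply]
  simp [mul_add, Finset.sum_add_distrib, codeword_eq, vecMul, dotProduct, Algebra.smul_def]

variable {ω : K}

theorem codeword_apply_eq_zero_iff (hωF : ω ∉ Set.range (algebraMap F K))
    (G : Matrix ι ι F) (q : ι → F) (j : ι) :
    codeword ω G q j = 0 ↔ q j = 0 ∧ (q ᵥ* G) j = 0 :=
  ⟨eq_zero_of_algebraMap_mul_add_eq_zero hωF, fun h => by simp [codeword_eq, h.1, h.2]⟩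

theorem nat_card_range_codeword (hωF : ω ∉ Set.range (algebraMap F K)) (G : Matrix ι ι F) :
    Nat.card (LinearMap.range (codeword ω G)) = Nat.card (ι → F) := by
  refine (Nat.card_congr (LinearEquiv.ofInjective _ ?_).toEquiv).symm
  refine (injective_iff_map_eq_zero _).mpr fun q hq => funext fun j => ?_
  exact ((codeword_apply_eq_zero_iff hωF G q j).mp (congrFun hq j)).1

variable [Fintype F] {p r n : ℕ}

theorem hermForm_codeword (hω : ω ^ Fintype.card F ≠ ω) {G : Matrix (Fin n) (Fin n) F}
    (hG : G.IsSymm) (x y q : Fin n → F) :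
    hermForm p r (Fintype.card F) ω (fun j => algebraMap F K (x j) * ω + algebraMap F K (y j))
        (codeword ω G q)
      = algebraMap F K (∑ i ∈ Finset.range r, ((x ᵥ* G - y) ⬝ᵥ q) ^ p ^ i) := by
  rw [codeword_eq, hermForm_algebraMap_mul_add hω, sub_dotProduct, ← mulVec_transpose, hG.eq,
    dotProduct_mulVec]

theorem hermForm_codeword_codeword (hF : Fintype.card F = p ^ r) (hω : ω ^ Fintype.card F ≠ ω)
    {G : Matrix (Fin n) (Fin n) F} (hG : G.IsSymm) (q q' : Fin n → F) :
    hermForm p r (Fintype.card F) ω (codeword ω G q) (codeword ω G q') = 0 := by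
  have hp : p ≠ 0 :=
    (zero_lt_one.trans (FiniteField.one_lt_and_ne_zero_of_card_eq_pow hF).1).ne'
  rw [codeword_eq, hermForm_codeword hω hG]
  simp [hp]

theorem mem_range_codeword_iff_forall_hermForm_eq_zero [Fintype K] (hF : Fintype.card F = p ^ r)
    (hK : Fintype.card K = Fintype.card F ^ 2) (hω : ω ^ Fintype.card F ≠ ω)
    {G : Matrix (Fin n) (Fin n) F} (hG : G.IsSymm) (u : Fin n → K) :
    u ∈ LinearMap.range (codeword ω G)
      ↔ ∀ c ∈ LinearMap.range (codeword ω G), hermForm p r (Fintype.card F) ω u c = 0 := by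
  refine ⟨?_, fun h => ?_⟩
  · rintro ⟨q, rfl⟩ _ ⟨q', rfl⟩
    exact hermForm_codeword_codeword hF hω hG q q'
  choose z hz using fun j =>
    (bijective_algebraMap_mul_add hK (notMem_range_algebraMap_of_pow_card_ne hω)).2 (u j)
  obtain ⟨x, y, rfl⟩ : ∃ x y : Fin n → F,
      (fun j => algebraMap F K (x j) * ω + algebraMap F K (y j)) = u :=
    ⟨fun j => (z j).1, fun j => (z j).2, funext hz⟩
  have hxG : x ᵥ* G - y = 0 := dotProduct_eq_zero_iff.mp fun q =>
    FiniteField.eq_zero_of_forall_sum_pow_pow_mul_eq_zero hF fun e => by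
      have := h _ ⟨e • q, rfl⟩
      rwa [hermForm_codeword hω hG, map_eq_zero_iff _ (algebraMap F K).injective,
        dotProduct_smul, smul_eq_mul] at this
  exact ⟨x, funext fun j => by simp [codeword_eq, sub_eq_zero.mp hxG]⟩

end AdditiveCode

section MDS

open Finset

variable {ι A : Type*} [AddCommGroup A] {C : AddSubgroup (ι → A)}

/-- Two coordinates determine a codeword, so by counting every pair of values occurs. -/
theorem nat_card_mem_and_apply_eq_zero [Finite A]
    (hC : ∀ c ∈ C, ∀ i j, i ≠ j → c i = 0 → c j = 0 → c = 0)
    (hcard : Nat.card C = Nat.card A ^ 2) {j k : ι} (hjk : j ≠ k) :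
    Nat.card {c // c ∈ C ∧ c j = 0} = Nat.card A := by
  have hpair : Function.Bijective fun c : C => ((c : ι → A) j, (c : ι → A) k) := by
    refine Function.Injective.bijective_of_nat_card_le (fun c c' h => ?_) ?_
    · simp only [Prod.mk.injEq] at h
      exact Subtype.ext <| sub_eq_zero.mp <| hC _ (C.sub_mem c.2 c'.2) j k hjk
        (by simp [h.1]) (by simp [h.2])
    · rw [Nat.card_prod, hcard, sq]
  refine Nat.card_eq_of_bijective (fun c => c.1 k) ⟨fun c c' h => ?_, fun a => ?_⟩
  · exact Subtype.ext <| sub_eq_zero.mp <| hC _ (C.sub_mem c.2.1 c'.2.1) j k hjk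
      (by simp [c.2.2, c'.2.2]) (by simp [h])
  · obtain ⟨c, hc⟩ := hpair.2 (0, a)
    simp only [Prod.mk.injEq] at hc
    exact ⟨⟨c, c.2, hc.1⟩, hc.2⟩

variable [Fintype ι] [DecidableEq A]

theorem hammingNorm_add_card_filter_eq_zero (c : ι → A) :
    hammingNorm c + #{j | c j = 0} = Fintype.card ι := by
  rw [hammingNorm, add_comm, card_filter_add_card_filter_not, card_univ]

variable (hC : ∀ c ∈ C, ∀ i j, i ≠ j → c i = 0 → c j = 0 → c = 0)
include hC

theorem card_filter_eq_zero_le_one {c : ι → A} (hc : c ∈ C) (hc0 : c ≠ 0) :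
    #{j | c j = 0} ≤ 1 :=
  card_le_one.mpr fun i hi j hj => by_contra fun hij =>
    hc0 (hC c hc i j hij (mem_filter.mp hi).2 (mem_filter.mp hj).2)

theorem card_sub_one_le_hammingNorm {c : ι → A} (hc : c ∈ C) (hc0 : c ≠ 0) :
    Fintype.card ι - 1 ≤ hammingNorm c := by
  have := hammingNorm_add_card_filter_eq_zero c
  have := card_filter_eq_zero_le_one hC hc hc0
  omega

theorem hammingNorm_eq_card_sub_one_iff (hι : 2 ≤ Fintype.card ι) {c : ι → A}
    (hc : c ∈ C) :
    hammingNorm c = Fintype.card ι - 1 ↔ c ≠ 0 ∧ ∃ j, c j = 0 := by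
  have hsum := hammingNorm_add_card_filter_eq_zero c
  refine ⟨fun h => ⟨?_, ?_⟩, fun ⟨hc0, j, hj⟩ => ?_⟩
  · rintro rfl
    rw [hammingNorm_zero] at h
    omega
  · obtain ⟨j, hj⟩ := card_pos.mp (show 0 < #{j | c j = 0} by omega)
    exact ⟨j, (mem_filter.mp hj).2⟩
  · have := card_filter_eq_zero_le_one hC hc hc0
    have : 0 < #{j | c j = 0} := card_pos.mpr ⟨j, mem_filter.mpr ⟨mem_univ j, hj⟩⟩
    omega

variable [Fintype A] (hcard : Nat.card C = Nat.card A ^ 2) (hι : 2 ≤ Fintype.card ι)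
include hcard hι

theorem nat_card_hammingNorm_eq_card_sub_one :
    Nat.card {c // c ∈ C ∧ hammingNorm c = Fintype.card ι - 1}
      = Fintype.card ι * (Nat.card A - 1) := by
  classical
  have hunion : ({c | c ∈ C ∧ hammingNorm c = Fintype.card ι - 1} : Finset (ι → A))
      = univ.biUnion fun j => ({c | c ∈ C ∧ c j = 0} : Finset (ι → A)).erase 0 := by
    ext c
    simp only [mem_filter, mem_univ, true_and, mem_biUnion, mem_erase]
    constructor
    · rintro ⟨hc, hw⟩
      obtain ⟨hc0, j, hj⟩ := (hammingNorm_eq_card_sub_one_iff hC hι hc).mp hw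
      exact ⟨j, hc0, hc, hj⟩
    · rintro ⟨j, hc0, hc, hj⟩
      exact ⟨hc, (hammingNorm_eq_card_sub_one_iff hC hι hc).mpr ⟨hc0, j, hj⟩⟩
  have hdisj : ((univ : Finset ι) : Set ι).PairwiseDisjoint
      fun j => ({c | c ∈ C ∧ c j = 0} : Finset (ι → A)).erase 0 := by
    intro i _ j _ hij
    refine disjoint_left.mpr fun c hci hcj => ?_
    simp only [mem_erase, mem_filter, mem_univ, true_and] at hci hcj
    exact hci.1 (hC c hci.2.1 i j hij hci.2.2 hcj.2.2)
  have hfiber (j : ι) :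
      #(({c | c ∈ C ∧ c j = 0} : Finset (ι → A)).erase 0) = Nat.card A - 1 := by
    obtain ⟨k, hk⟩ := Fintype.exists_ne_of_one_lt_card (by omega) j
    rw [card_erase_of_mem (by simp [C.zero_mem]),
      ← nat_card_mem_and_apply_eq_zero hC hcard hk.symm, Nat.card_eq_fintype_card,
      Fintype.card_subtype]
  rw [Nat.card_eq_fintype_card, Fintype.card_subtype, hunion, card_biUnion hdisj]
  simp [hfiber]

theorem nat_card_hammingNorm_eq_card_add_add_one :
    Nat.card {c // c ∈ C ∧ hammingNorm c = Fintype.card ι}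
      + Fintype.card ι * (Nat.card A - 1) + 1 = Nat.card A ^ 2 := by
  classical
  set W : ℕ → Finset (ι → A) := fun w => {c | c ∈ C ∧ hammingNorm c = w}
  have hzero : (0 : ι → A) ∉ W (Fintype.card ι) ∪ W (Fintype.card ι - 1) := by
    simp [W, hammingNorm_zero]
    omega
  have hdisj : Disjoint (W (Fintype.card ι)) (W (Fintype.card ι - 1)) :=
    disjoint_filter.mpr fun c _ h h' => by omega
  have hC_eq : ({c | c ∈ C} : Finset (ι → A))
      = insert 0 (W (Fintype.card ι) ∪ W (Fintype.card ι - 1)) := by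
    ext c
    simp only [W, mem_insert, mem_union, mem_filter, mem_univ, true_and]
    constructor
    · intro hc
      by_cases hc0 : c = 0
      · exact .inl hc0
      · have := card_sub_one_le_hammingNorm hC hc hc0
        have := hammingNorm_le_card_fintype (x := c)
        simp only [hc, true_and, hc0, false_or]
        omega
    · rintro (rfl | ⟨hc, _⟩ | ⟨hc, _⟩) <;> simp_all [C.zero_mem]
  rw [← nat_card_hammingNorm_eq_card_sub_one hC hcard hι, ← hcard]
  simp only [Nat.card_eq_fintype_card, Fintype.card_subtype]
  rw [hC_eq, card_insert_of_notMem hzero, card_union_of_disjoint hdisj]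

theorem nat_card_hammingNorm_eq_card :
    Nat.card {c // c ∈ C ∧ hammingNorm c = Fintype.card ι}
      = (Nat.card A - 1) * (Nat.card A + 1 - Fintype.card ι) := by
  have hsplit := nat_card_hammingNorm_eq_card_add_add_one hC hcard hι
  obtain ⟨b, hb⟩ : ∃ b, Nat.card A = b + 1 :=
    ⟨_, (Nat.succ_pred_eq_of_pos Nat.card_pos).symm⟩
  rw [hb, Nat.add_sub_cancel] at hsplit ⊢
  rw [show b + 1 + 1 - Fintype.card ι = b + 2 - Fintype.card ι by omega, Nat.mul_sub]
  refine Nat.eq_sub_of_add_eq ?_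
  linarith

end MDS

section OffDiagPart

variable {F K : Type*} [Field F] [Field K] [Algebra F K]

def offDiagPart (α : F) : Matrix (Fin 4) (Fin 4) F :=
  !![0, 1, 1, 0; 1, 0, 0, 1; 1, 0, 0, α; 0, 1, α, 0]

theorem offDiagPart_isSymm (α : F) : (offDiagPart α).IsSymm := by
  ext i j
  fin_cases i <;> fin_cases j <;> rfl

-- For zeros at `i` and `j` the other two entries of `q` solve a 2 × 2 system with
-- determinant `±1`, `±α` or `±(1 - α)`.
theorem eq_zero_of_vecMul_offDiagPart {α : F} (hα0 : α ≠ 0) (hα1 : α ≠ 1) {q : Fin 4 → F}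
    {i j : Fin 4} (hij : i ≠ j) (hi : q i = 0 ∧ (q ᵥ* offDiagPart α) i = 0)
    (hj : q j = 0 ∧ (q ᵥ* offDiagPart α) j = 0) : q = 0 := by
  simp only [offDiagPart, vecMul, dotProduct, Fin.sum_univ_four] at hi hj
  fin_cases i <;> fin_cases j <;> simp at hij hi hj <;> ext k <;> fin_cases k <;> simp <;> grind

theorem span_rows_eq_range_codeword_offDiagPart (ω : K) (α : F) :
    Submodule.span F (Set.range
      ![![ω, 1, 1, 0],
        ![1, ω, 0, 1],
        ![1, 0, ω, algebraMap F K α],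
        ![0, 1, algebraMap F K α, ω]]) = LinearMap.range (codeword ω (offDiagPart α)) := by
  rw [← span_rows_eq_range_codeword]
  congr
  ext i j
  fin_cases i <;> fin_cases j <;> simp [offDiagPart]

theorem eq_zero_of_mem_range_codeword_offDiagPart {ω : K}
    (hωF : ω ∉ Set.range (algebraMap F K)) {α : F} (hα0 : α ≠ 0) (hα1 : α ≠ 1) :
    ∀ c ∈ (LinearMap.range (codeword ω (offDiagPart α))).toAddSubgroup,
      ∀ i j, i ≠ j → c i = 0 → c j = 0 → c = 0 := by
  rintro _ ⟨q, rfl⟩ i j hij hi hj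
  rw [eq_zero_of_vecMul_offDiagPart hα0 hα1 hij ((codeword_apply_eq_zero_iff hωF _ q i).mp hi)
    ((codeword_apply_eq_zero_iff hωF _ q j).mp hj), map_zero]

end OffDiagPart

theorem stmt17_general (p r m : ℕ) (hm : m = p ^ r)
    (F K : Type) [Field F] [Fintype F] [Field K] [Fintype K] [DecidableEq K]
    [Algebra F K] (hF : Fintype.card F = m) (hK : Fintype.card K = m ^ 2)
    (ω : K) (hω : ∀ x : K, x ≠ 0 → ∃ k : ℕ, ω ^ k = x)
    (α : F) (hα0 : α ≠ 0) (hα1 : α ≠ 1)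
    (C : Submodule F (Fin 4 → K))
    (hC : C = Submodule.span F (Set.range
      ![![ω, 1, 1, 0],
        ![1, ω, 0, 1],
        ![1, 0, ω, algebraMap F K α],
        ![0, 1, algebraMap F K α, ω]])) :
    (∀ u, u ∈ C ↔ ∀ c ∈ C, hermForm p r m ω u c = 0) ∧
    Nat.card C = m ^ 4 ∧
    (∀ c ∈ C, c ≠ 0 → 3 ≤ (Finset.univ.filter fun j => c j ≠ 0).card) ∧
    Nat.card {c : Fin 4 → K // c ∈ C ∧
        (Finset.univ.filter fun j => c j ≠ 0).card = 3} = 4 * (m ^ 2 - 1) ∧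
    Nat.card {c : Fin 4 → K // c ∈ C ∧
        (Finset.univ.filter fun j => c j ≠ 0).card = 4} = (m ^ 2 - 3) * (m ^ 2 - 1) := by
  subst hF
  have hq : 1 < Fintype.card F := Fintype.one_lt_card
  have hωpow : ω ^ Fintype.card F ≠ ω :=
    pow_ne_self_of_forall_exists_pow_eq hω hq (by rw [hK]; exact lt_self_pow₀ hq one_lt_two)
  have hωF := notMem_range_algebraMap_of_pow_card_ne hωpow
  rw [span_rows_eq_range_codeword_offDiagPart] at hC
  subst hC
  have hzeros := eq_zero_of_mem_range_codeword_offDiagPart hωF hα0 hα1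
  have hcard : Nat.card (LinearMap.range (codeword ω (offDiagPart α))) = Fintype.card F ^ 4 := by
    rw [nat_card_range_codeword hωF, Nat.card_fun]
    simp
  have hcard' : Nat.card (LinearMap.range (codeword ω (offDiagPart α))).toAddSubgroup
      = Nat.card K ^ 2 := by
    rw [Nat.card_eq_fintype_card (α := K), hK, ← pow_mul]
    exact hcard
  have hweight3 := nat_card_hammingNorm_eq_card_sub_one hzeros hcard' (by simp)
  have hweight4 := nat_card_hammingNorm_eq_card hzeros hcard' (by simp)
  simp only [Fintype.card_fin, Nat.card_eq_fintype_card (α := K), hK] at hweight3 hweight4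
  refine ⟨mem_range_codeword_iff_forall_hermForm_eq_zero hm hK hωpow (offDiagPart_isSymm α),
    hcard, fun c hc hc0 => card_sub_one_le_hammingNorm hzeros hc hc0, hweight3, ?_⟩
  rw [show Fintype.card F ^ 2 - 3 = Fintype.card F ^ 2 + 1 - 4 by omega, mul_comm]
  exact hweight4

/-- The 4×4 matrix with `ω` on the diagonal, `C₁₂ = C₂₁ = C₁₃ = C₃₁ = C₂₄ = C₄₂ = 1`,
    `C₃₄ = C₄₃ = α` (`α ∈ F_m \ {0,1}`) and zeros elsewhere generates, over `F_m`, a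
    self-dual additive `(4, m^4, 3)` MDS code over `F_{m^2}` for every prime power
    `m ≥ 3`, with weight enumerator `W(1,y) = 1 + 4(m^2-1) y^3 + (m^2-3)(m^2-1) y^4`. -/
theorem stmt17 (p r m : ℕ) (hp : p.Prime) (hr : 0 < r) (hm : m = p ^ r) (hm3 : 3 ≤ m)
    (F K : Type) [Field F] [Fintype F] [Field K] [Fintype K] [DecidableEq K]
    [Algebra F K] (hF : Fintype.card F = m) (hK : Fintype.card K = m ^ 2)
    (ω : K) (hω : ∀ x : K, x ≠ 0 → ∃ k : ℕ, ω ^ k = x)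
    (α : F) (hα0 : α ≠ 0) (hα1 : α ≠ 1)
    (C : Submodule F (Fin 4 → K))
    (hC : C = Submodule.span F (Set.range
      ![![ω, 1, 1, 0],
        ![1, ω, 0, 1],
        ![1, 0, ω, algebraMap F K α],
        ![0, 1, algebraMap F K α, ω]])) :
    (∀ u, u ∈ C ↔ ∀ c ∈ C, hermForm p r m ω u c = 0) ∧
    Nat.card C = m ^ 4 ∧
    (∀ c ∈ C, c ≠ 0 → 3 ≤ (Finset.univ.filter fun j => c j ≠ 0).card) ∧
    Nat.card {c : Fin 4 → K // c ∈ C ∧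
        (Finset.univ.filter fun j => c j ≠ 0).card = 3} = 4 * (m ^ 2 - 1) ∧
    Nat.card {c : Fin 4 → K // c ∈ C ∧
        (Finset.univ.filter fun j => c j ≠ 0).card = 4} = (m ^ 2 - 3) * (m ^ 2 - 1) :=
  stmt17_general p r m hm F K hF hK ω hω α hα0 hα1 C hC
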